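/- arXiv:2109.12179 — 6 statements merged into one kernel-verified Lean document; each statement's English description precedes it below -/
import Mathlib

section
/- Let X and Y be finite sets each with at least two elements, equipped with strict total orders ≻_X and ≻_Y. Define ≻ on X × Y as the ceteris paribus order generated by flips: (x₁,y) ≻ (x₂,y) whenever x₁ ≻_X x₂, and (x,y₁) ≻ (x,y₂) whenever y₁ ≻_Y y₂, closed under transitivity. Then there exist pairs (x₁,y₂) and (x₂,y₁) with x₁ ≻_X x₂ and y₁ ≻_Y y₂ such that neither (x₁,y₂) ≻ (x₂,y₁) nor (x₂,y₁) ≻ (x₁,y₂); in particular ≻ is not total. -/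
theorem stmt_2 {X Y : Type*} [Finite X] [Finite Y] [Nontrivial X] [Nontrivial Y]
    (rX : X → X → Prop) (rY : Y → Y → Prop)
    (hXirr : ∀ x, ¬ rX x x) (hXtrans : ∀ a b c, rX a b → rX b c → rX a c)
    (hXtotal : ∀ a b : X, a ≠ b → rX a b ∨ rX b a)
    (hYirr : ∀ y, ¬ rY y y) (hYtrans : ∀ a b c, rY a b → rY b c → rY a c)
    (hYtotal : ∀ a b : Y, a ≠ b → rY a b ∨ rY b a)
    (flip : X × Y → X × Y → Prop)
    (hflip : ∀ p q, flip p q ↔ (p.2 = q.2 ∧ rX p.1 q.1) ∨ (p.1 = q.1 ∧ rY p.2 q.2))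
    (pref : X × Y → X × Y → Prop)
    (hpref : ∀ p q, pref p q ↔ Relation.TransGen flip p q) :
    ∃ (x₁ x₂ : X) (y₁ y₂ : Y), rX x₁ x₂ ∧ rY y₁ y₂ ∧
      ¬ pref (x₁, y₂) (x₂, y₁) ∧ ¬ pref (x₂, y₁) (x₁, y₂) := by
  -- invariant: any TransGen chain weakly decreases both coordinates
  have key : ∀ p q : X × Y, Relation.TransGen flip p q →
      (rX p.1 q.1 ∨ p.1 = q.1) ∧ (rY p.2 q.2 ∨ p.2 = q.2) := by
    intro p q h
    induction h with
    | single h =>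
      rcases (hflip _ _).1 h with ⟨he, hr⟩ | ⟨he, hr⟩
      · exact ⟨Or.inl hr, Or.inr he⟩
      · exact ⟨Or.inr he, Or.inl hr⟩
    | tail _ h ih =>
      rename_i b c _
      rcases (hflip _ _).1 h with ⟨he, hr⟩ | ⟨he, hr⟩
      · refine ⟨?_, ?_⟩
        · rcases ih.1 with h1 | h1
          · exact Or.inl (hXtrans _ _ _ h1 hr)
          · exact Or.inl (h1 ▸ hr)
        · rcases ih.2 with h2 | h2
          · exact Or.inl (he ▸ h2)
          · exact Or.inr (h2.trans he)
      · refine ⟨?_, ?_⟩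
        · rcases ih.1 with h1 | h1
          · exact Or.inl (he ▸ h1)
          · exact Or.inr (h1.trans he)
        · rcases ih.2 with h2 | h2
          · exact Or.inl (hYtrans _ _ _ h2 hr)
          · exact Or.inl (h2 ▸ hr)
  obtain ⟨a, b, hab⟩ := exists_pair_ne X
  obtain ⟨c, d, hcd⟩ := exists_pair_ne Y
  obtain ⟨x₁, x₂, hx⟩ : ∃ x₁ x₂, rX x₁ x₂ := by
    rcases hXtotal a b hab with h | h
    · exact ⟨a, b, h⟩
    · exact ⟨b, a, h⟩
  obtain ⟨y₁, y₂, hy⟩ : ∃ y₁ y₂, rY y₁ y₂ := by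
    rcases hYtotal c d hcd with h | h
    · exact ⟨c, d, h⟩
    · exact ⟨d, c, h⟩
  refine ⟨x₁, x₂, y₁, y₂, hx, hy, ?_, ?_⟩
  · intro h
    rcases (key _ _ ((hpref _ _).1 h)).2 with h2 | h2
    · exact hYirr _ (hYtrans _ _ _ hy h2)
    · exact hYirr _ ((show y₂ = y₁ from h2) ▸ hy)
  · intro h
    rcases (key _ _ ((hpref _ _).1 h)).1 with h1 | h1
    · exact hXirr _ (hXtrans _ _ _ hx h1)
    · exact hXirr _ ((show x₂ = x₁ from h1) ▸ hx)
end

section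
/- Let V = {1,…,n} and for each i a finite domain D_i with a family of strict total orders on D_i indexed by assignments to a parent set Pa(i) ⊆ {1,…,i−1} (an acyclic CP-net in topological order). Define the optimal outcome o* by forward sweep: o*_1 is the top element of ≻_1, and inductively o*_i is the top element of the order on D_i conditioned on the values o*_j for j ∈ Pa(i). Then for every outcome o ≠ o*, o* is reachable from o by a sequence of improving flips; hence o* ≻ o in the induced preference order. -/
theorem stmt_10 {n : ℕ} (D : Fin n → Type) [∀ i, Finite (D i)]
    (Pa : Fin n → Set (Fin n)) (hPa : ∀ i j, j ∈ Pa i → j < i)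
    (r : ∀ i : Fin n, (∀ j, D j) → D i → D i → Prop)
    (hdep : ∀ i o o', (∀ j ∈ Pa i, o j = o' j) → ∀ a b, (r i o a b ↔ r i o' a b))
    (hirr : ∀ i o a, ¬ r i o a a)
    (htrans : ∀ i o a b c, r i o a b → r i o b c → r i o a c)
    (htotal : ∀ i o (a b : D i), a ≠ b → r i o a b ∨ r i o b a)
    (flip : (∀ j, D j) → (∀ j, D j) → Prop)
    (hflip : ∀ a b, flip a b ↔ ∃ i, (∀ j, j ≠ i → a j = b j) ∧ r i b (a i) (b i))
    (pref : (∀ j, D j) → (∀ j, D j) → Prop)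
    (hpref : ∀ a b, pref a b ↔ Relation.TransGen flip a b)
    (ostar : ∀ j, D j)
    (htop : ∀ i (b : D i), b ≠ ostar i → r i ostar (ostar i) b) :
    ∀ o, o ≠ ostar → pref ostar o := by
  classical
  suffices H : ∀ k (o : ∀ j, D j),
      (Finset.univ.filter (fun j => o j ≠ ostar j)).card ≤ k → o ≠ ostar → pref ostar o by
    intro o hne; exact H _ o le_rfl hne
  intro k
  induction k with
  | zero =>
    intro o hcard hne
    exfalso
    apply hne
    funext j
    by_contra hj
    have : j ∈ Finset.univ.filter (fun j => o j ≠ ostar j) := by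
      simp [hj]
    have := Finset.card_pos.mpr ⟨j, this⟩
    omega
  | succ k ih =>
    intro o hcard hne
    set S := Finset.univ.filter (fun j => o j ≠ ostar j) with hS
    have hSne : S.Nonempty := by
      by_contra h
      apply hne
      funext j
      by_contra hj
      exact h ⟨j, by simp [hS, hj]⟩
    set i := S.min' hSne with hi
    have hiS : i ∈ S := S.min'_mem hSne
    have hio : o i ≠ ostar i := by simpa [hS] using hiS
    -- agreement on parents
    have hagree : ∀ j ∈ Pa i, o j = ostar j := by
      intro j hj
      by_contra hj'
      have hjS : j ∈ S := by simp [hS, hj']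
      exact absurd (S.min'_le j hjS) (not_le.mpr (hPa i j hj))
    have hr : r i o (ostar i) (o i) :=
      (hdep i o ostar hagree (ostar i) (o i)).mpr (htop i (o i) hio)
    set o' := Function.update o i (ostar i) with ho'
    have hflip' : flip o' o := by
      rw [hflip]
      exact ⟨i, fun j hj => Function.update_of_ne hj _ _, by
        simpa [ho', Function.update_self] using hr⟩
    have hsub : Finset.univ.filter (fun j => o' j ≠ ostar j) ⊆ S.erase i := by
      intro j hj
      simp only [Finset.mem_filter, Finset.mem_univ, true_and] at hj
      rcases eq_or_ne j i with rfl | hji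
      · simp [ho', Function.update_self] at hj
      · refine Finset.mem_erase.mpr ⟨hji, ?_⟩
        simp only [hS, Finset.mem_filter, Finset.mem_univ, true_and]
        rwa [ho', Function.update_of_ne hji] at hj
    have hcard' : (Finset.univ.filter (fun j => o' j ≠ ostar j)).card ≤ k := by
      have h1 := Finset.card_le_card hsub
      have h2 : (S.erase i).card < S.card := Finset.card_erase_lt_of_mem hiS
      omega
    rcases eq_or_ne o' ostar with heq | hne'
    · rw [hpref]
      exact Relation.TransGen.single (heq ▸ hflip')
    · have hp := ih o' hcard' hne'
      rw [hpref] at hp ⊢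
      exact hp.tail hflip'
end

section
/- Consider an acyclic CP-net in topological order on variables 1,…,n, and two outcomes o₁, o₂. Let k be the least index at which o₁ and o₂ differ, so o₁ and o₂ agree on coordinates 1,…,k−1 (hence on all ancestors of k). If the conditional preference order on D_k given the common parent values ranks o₂'s value at k strictly above o₁'s value at k, then o₁ ≻ o₂ does not hold in the induced preference order (the ordering-query / prefix-elimination lemma). -/
/-! Every outcome `a` on an improving flipping sequence ending in `o₂` is lexicographically below
`o₂`: there is a coordinate `m` below which `a` agrees with `o₂` and at which `a m` is worse than
`o₂ m` in the order given by `o₂`'s parent values. A flip at a coordinate before `m` moves the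
witness down, a flip at `m` keeps it by transitivity, and a later flip does not touch it. Hence
`o₁ ≻ o₂` would force `o₁ k` below `o₂ k` at the first difference `k`, against the hypothesis. -/

namespace CPNet

variable {ι : Type*} [LinearOrder ι] {D : ι → Type*}

def ImprovingFlip (r : ∀ i, (∀ j, D j) → D i → D i → Prop) (a b : ∀ j, D j) : Prop :=
  ∃ i, (∀ j, j ≠ i → a j = b j) ∧ r i b (a i) (b i)

def LexBelow (r : ∀ i, (∀ j, D j) → D i → D i → Prop) (a b : ∀ j, D j) : Prop :=
  ∃ m, (∀ j < m, a j = b j) ∧ r m b (a m) (b m)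

def DependsOnlyBelow (r : ∀ i, (∀ j, D j) → D i → D i → Prop) : Prop :=
  ∀ i o o', (∀ j < i, o j = o' j) → ∀ a b, (r i o a b ↔ r i o' a b)

variable {r : ∀ i, (∀ j, D j) → D i → D i → Prop}

theorem ImprovingFlip.lexBelow {a b : ∀ j, D j} (h : ImprovingFlip r a b) : LexBelow r a b :=
  let ⟨i, hagree, hi⟩ := h
  ⟨i, fun j hj => hagree j hj.ne, hi⟩

theorem LexBelow.of_improvingFlip (hdep : DependsOnlyBelow r)
    (htrans : ∀ i o a b c, r i o a b → r i o b c → r i o a c)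
    {a c b : ∀ j, D j} (hac : ImprovingFlip r a c) (hcb : LexBelow r c b) : LexBelow r a b := by
  obtain ⟨i, hac_eq, hac_r⟩ := hac
  obtain ⟨m, hcb_eq, hcb_r⟩ := hcb
  rcases lt_trichotomy i m with hlt | rfl | hgt
  · refine ⟨i, fun j hj => ?_, ?_⟩
    · rw [hac_eq j hj.ne, hcb_eq j (hj.trans hlt)]
    · rw [← hcb_eq i hlt]
      exact (hdep i c b (fun j hj => hcb_eq j (hj.trans hlt)) _ _).mp hac_r
  · refine ⟨i, fun j hj => ?_, ?_⟩
    · rw [hac_eq j hj.ne, hcb_eq j hj]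
    · exact htrans i b _ _ _ ((hdep i c b hcb_eq _ _).mp hac_r) hcb_r
  · refine ⟨m, fun j hj => ?_, ?_⟩
    · rw [hac_eq j (hj.trans hgt).ne, hcb_eq j hj]
    · rwa [hac_eq m hgt.ne]

theorem lexBelow_of_transGen (hdep : DependsOnlyBelow r)
    (htrans : ∀ i o a b c, r i o a b → r i o b c → r i o a c)
    {a b : ∀ j, D j} (h : Relation.TransGen (ImprovingFlip r) a b) : LexBelow r a b := by
  induction h using Relation.TransGen.head_induction_on with
  | single hflip => exact hflip.lexBelow
  | head hflip _ ih => exact ih.of_improvingFlip hdep htrans hflip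

theorem not_lexBelow_of_better_at_first_diff (hdep : DependsOnlyBelow r)
    (hirr : ∀ i o a, ¬ r i o a a) (htrans : ∀ i o a b c, r i o a b → r i o b c → r i o a c)
    {o₁ o₂ : ∀ j, D j} {k : ι} (hagree : ∀ j < k, o₁ j = o₂ j) (hdiff : o₁ k ≠ o₂ k)
    (hbetter : r k o₁ (o₂ k) (o₁ k)) : ¬ LexBelow r o₁ o₂ := by
  rintro ⟨m, hm_eq, hm_r⟩
  rcases lt_trichotomy m k with hlt | rfl | hgt
  · rw [hagree m hlt] at hm_r
    exact hirr m o₂ _ hm_r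
  · exact hirr m o₂ _ (htrans m o₂ _ _ _ hm_r ((hdep m o₁ o₂ hagree _ _).mp hbetter))
  · exact hdiff (hm_eq k hgt)

end CPNet

open CPNet in
theorem stmt_11_general {n : ℕ} (D : Fin n → Type)
    (Pa : Fin n → Set (Fin n)) (hPa : ∀ i j, j ∈ Pa i → j < i)
    (r : ∀ i : Fin n, (∀ j, D j) → D i → D i → Prop)
    (hdep : ∀ i o o', (∀ j ∈ Pa i, o j = o' j) → ∀ a b, (r i o a b ↔ r i o' a b))
    (hirr : ∀ i o a, ¬ r i o a a)
    (htrans : ∀ i o a b c, r i o a b → r i o b c → r i o a c)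
    (flip : (∀ j, D j) → (∀ j, D j) → Prop)
    (hflip : ∀ a b, flip a b ↔ ∃ i, (∀ j, j ≠ i → a j = b j) ∧ r i b (a i) (b i))
    (pref : (∀ j, D j) → (∀ j, D j) → Prop)
    (hpref : ∀ a b, pref a b ↔ Relation.TransGen flip a b)
    (o₁ o₂ : ∀ j, D j) (k : Fin n)
    (hagree : ∀ j, j < k → o₁ j = o₂ j)
    (hdiff : o₁ k ≠ o₂ k)
    (hbetter : r k o₁ (o₂ k) (o₁ k)) :
    ¬ pref o₁ o₂ := by
  have hdep_below : DependsOnlyBelow r := fun i o o' hbelow =>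
    hdep i o o' fun j hj => hbelow j (hPa i j hj)
  intro hp
  have hflips : Relation.TransGen (ImprovingFlip r) o₁ o₂ :=
    Relation.TransGen.mono (fun a b hab => (hflip a b).mp hab) _ _ ((hpref o₁ o₂).mp hp)
  exact not_lexBelow_of_better_at_first_diff hdep_below hirr htrans hagree hdiff hbetter
    (lexBelow_of_transGen hdep_below htrans hflips)

theorem stmt_11 {n : ℕ} (D : Fin n → Type) [∀ i, Finite (D i)]
    (Pa : Fin n → Set (Fin n)) (hPa : ∀ i j, j ∈ Pa i → j < i)
    (r : ∀ i : Fin n, (∀ j, D j) → D i → D i → Prop)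
    (hdep : ∀ i o o', (∀ j ∈ Pa i, o j = o' j) → ∀ a b, (r i o a b ↔ r i o' a b))
    (hirr : ∀ i o a, ¬ r i o a a)
    (htrans : ∀ i o a b c, r i o a b → r i o b c → r i o a c)
    (htotal : ∀ i o (a b : D i), a ≠ b → r i o a b ∨ r i o b a)
    (flip : (∀ j, D j) → (∀ j, D j) → Prop)
    (hflip : ∀ a b, flip a b ↔ ∃ i, (∀ j, j ≠ i → a j = b j) ∧ r i b (a i) (b i))
    (pref : (∀ j, D j) → (∀ j, D j) → Prop)
    (hpref : ∀ a b, pref a b ↔ Relation.TransGen flip a b)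
    (o₁ o₂ : ∀ j, D j) (k : Fin n)
    (hagree : ∀ j, j < k → o₁ j = o₂ j)
    (hdiff : o₁ k ≠ o₂ k)
    (hbetter : r k o₁ (o₂ k) (o₁ k)) :
    ¬ pref o₁ o₂ :=
  stmt_11_general D Pa hPa r hdep hirr htrans flip hflip pref hpref o₁ o₂ k hagree hdiff hbetter
end

section
/- Let N be an acyclic CP-net with induced flip-based preference ≻, and let o₁ = R·x₁·o₁′, o₂ = R·x₂·o₂′ share the ancestor assignment R at variable X, with x₁ ≻ x₂ given R. Let N₁ be the sub-CP-net on the remaining variables obtained by restricting all CPTs to the assignment R·x₁, with induced preference ≻₁. If o₁′ ≻₁ o₂′, then o₁ ≻ o₂. -/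
theorem stmt_13_general {n : ℕ} (D : Fin n → Type)
    (r : ∀ i : Fin n, (∀ j, D j) → D i → D i → Prop)
    (flip : (∀ j, D j) → (∀ j, D j) → Prop)
    (hflip : ∀ a b, flip a b ↔ ∃ i, (∀ j, j ≠ i → a j = b j) ∧ r i b (a i) (b i))
    (pref : (∀ j, D j) → (∀ j, D j) → Prop)
    (hpref : ∀ a b, pref a b ↔ Relation.TransGen flip a b)
(flipA : Fin n → (∀ j, D j) → (∀ j, D j) → Prop)
    (hflipA : ∀ k a b, flipA k a b ↔
      ∃ i, k < i ∧ (∀ j, j ≠ i → a j = b j) ∧ r i b (a i) (b i))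
    (o₁ o₂ : ∀ j, D j) (k : Fin n)
    (hx : r k o₂ (o₁ k) (o₂ k))
    (hsub : Relation.TransGen (flipA k) o₁ (Function.update o₂ k (o₁ k))) :
    pref o₁ o₂ := by
  have flip_of_flipA : ∀ a b, flipA k a b → flip a b := fun a b h => by
    obtain ⟨i, -, hagree, hi⟩ := (hflipA k a b).1 h
    exact (hflip a b).2 ⟨i, hagree, hi⟩
  have hlast : flip (Function.update o₂ k (o₁ k)) o₂ :=
    (hflip _ _).2 ⟨k, fun j hj => Function.update_of_ne hj _ _, by simpa using hx⟩
  exact (hpref o₁ o₂).2 ((Relation.TransGen.mono flip_of_flipA _ _ hsub).tail hlast)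

theorem stmt_13 {n : ℕ} (D : Fin n → Type) [∀ i, Finite (D i)]
    (Pa : Fin n → Set (Fin n)) (hPa : ∀ i j, j ∈ Pa i → j < i)
    (r : ∀ i : Fin n, (∀ j, D j) → D i → D i → Prop)
    (hdep : ∀ i o o', (∀ j ∈ Pa i, o j = o' j) → ∀ a b, (r i o a b ↔ r i o' a b))
    (hirr : ∀ i o a, ¬ r i o a a)
    (htrans : ∀ i o a b c, r i o a b → r i o b c → r i o a c)
    (htotal : ∀ i o (a b : D i), a ≠ b → r i o a b ∨ r i o b a)
    (flip : (∀ j, D j) → (∀ j, D j) → Prop)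
    (hflip : ∀ a b, flip a b ↔ ∃ i, (∀ j, j ≠ i → a j = b j) ∧ r i b (a i) (b i))
    (pref : (∀ j, D j) → (∀ j, D j) → Prop)
    (hpref : ∀ a b, pref a b ↔ Relation.TransGen flip a b)
(flipA : Fin n → (∀ j, D j) → (∀ j, D j) → Prop)
    (hflipA : ∀ k a b, flipA k a b ↔
      ∃ i, k < i ∧ (∀ j, j ≠ i → a j = b j) ∧ r i b (a i) (b i))
    (o₁ o₂ : ∀ j, D j) (k : Fin n)
    (hR : ∀ j, j < k → o₁ j = o₂ j)
    (hx : r k o₂ (o₁ k) (o₂ k))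
    (hsub : Relation.TransGen (flipA k) o₁ (Function.update o₂ k (o₁ k))) :
    pref o₁ o₂ :=
  stmt_13_general D r flip hflip pref hpref flipA hflipA o₁ o₂ k hx hsub
end

section
/- Let N be an acyclic CP-net with induced flip-based preference ≻, and let o₁ = R·x₁·o₁′, o₂ = R·x₂·o₂′ share the ancestor assignment R at variable X, with x₁ ≻ x₂ given R. Let N₂ be the sub-CP-net on the remaining variables obtained by restricting all CPTs to R·x₂, with induced preference ≻₂. If o₁′ ≻₂ o₂′, then o₁ ≻ o₂. -/
/-!
`R·x₁·o₁′` improves on `R·x₂·o₁′` by a single flip of `X`: the parents of `X` come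
before `X`, so they are fixed by the common prefix `R`. Every flip
of the sub-net changes a variable after `X` and is a flip of the whole net, so
chaining the two gives `o₁ ≻ o₂`.
-/

section FlipOrder

variable {n : ℕ} {D : Fin n → Type} {Pa : Fin n → Set (Fin n)}
  {r : ∀ i : Fin n, (∀ j, D j) → D i → D i → Prop}

/-- `a` improves on `b` by changing only the variable `i`. -/
def IsImprovingFlip (r : ∀ i : Fin n, (∀ j, D j) → D i → D i → Prop) (i : Fin n)
    (a b : ∀ j, D j) : Prop :=
  (∀ j, j ≠ i → a j = b j) ∧ r i b (a i) (b i)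

theorem cpt_congr_of_eq_below (hPa : ∀ i j, j ∈ Pa i → j < i)
    (hdep : ∀ i o o', (∀ j ∈ Pa i, o j = o' j) → ∀ a b, (r i o a b ↔ r i o' a b))
    {k : Fin n} {o o' : ∀ j, D j} (h : ∀ j, j < k → o j = o' j) (a b : D k) :
    r k o a b ↔ r k o' a b :=
  hdep k o o' (fun j hj => h j (hPa k j hj)) a b

theorem isImprovingFlip_update (hPa : ∀ i j, j ∈ Pa i → j < i)
    (hdep : ∀ i o o', (∀ j ∈ Pa i, o j = o' j) → ∀ a b, (r i o a b ↔ r i o' a b))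
    {o₁ o₂ : ∀ j, D j} {k : Fin n} (hR : ∀ j, j < k → o₁ j = o₂ j)
    (hx : r k o₂ (o₁ k) (o₂ k)) :
    IsImprovingFlip r k o₁ (Function.update o₁ k (o₂ k)) := by
  refine ⟨fun j hj => (Function.update_of_ne hj _ _).symm, ?_⟩
  rw [Function.update_self]
  refine (cpt_congr_of_eq_below hPa hdep (fun j hj => ?_) _ _).2 hx
  rw [Function.update_of_ne hj.ne]
  exact hR j hj

end FlipOrder

theorem stmt_14_general {n : ℕ} (D : Fin n → Type)
    (Pa : Fin n → Set (Fin n)) (hPa : ∀ i j, j ∈ Pa i → j < i)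
    (r : ∀ i : Fin n, (∀ j, D j) → D i → D i → Prop)
    (hdep : ∀ i o o', (∀ j ∈ Pa i, o j = o' j) → ∀ a b, (r i o a b ↔ r i o' a b))
    (flip : (∀ j, D j) → (∀ j, D j) → Prop)
    (hflip : ∀ a b, flip a b ↔ ∃ i, (∀ j, j ≠ i → a j = b j) ∧ r i b (a i) (b i))
    (pref : (∀ j, D j) → (∀ j, D j) → Prop)
    (hpref : ∀ a b, pref a b ↔ Relation.TransGen flip a b)
(flipA : Fin n → (∀ j, D j) → (∀ j, D j) → Prop)
    (hflipA : ∀ k a b, flipA k a b ↔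
      ∃ i, k < i ∧ (∀ j, j ≠ i → a j = b j) ∧ r i b (a i) (b i))
    (o₁ o₂ : ∀ j, D j) (k : Fin n)
    (hR : ∀ j, j < k → o₁ j = o₂ j)
    (hx : r k o₂ (o₁ k) (o₂ k))
    (hsub : Relation.TransGen (flipA k) (Function.update o₁ k (o₂ k)) o₂) :
    pref o₁ o₂ := by
  have hflip_x : flip o₁ (Function.update o₁ k (o₂ k)) :=
    (hflip _ _).2 ⟨k, isImprovingFlip_update hPa hdep hR hx⟩
  have hsub_flip : flipA k ≤ flip := fun a b hab => by
    obtain ⟨i, -, hi⟩ := (hflipA k a b).1 hab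
    exact (hflip a b).2 ⟨i, hi⟩
  exact (hpref _ _).2 (.head hflip_x (Relation.TransGen.mono hsub_flip _ _ hsub))

theorem stmt_14 {n : ℕ} (D : Fin n → Type) [∀ i, Finite (D i)]
    (Pa : Fin n → Set (Fin n)) (hPa : ∀ i j, j ∈ Pa i → j < i)
    (r : ∀ i : Fin n, (∀ j, D j) → D i → D i → Prop)
    (hdep : ∀ i o o', (∀ j ∈ Pa i, o j = o' j) → ∀ a b, (r i o a b ↔ r i o' a b))
    (hirr : ∀ i o a, ¬ r i o a a)
    (htrans : ∀ i o a b c, r i o a b → r i o b c → r i o a c)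
    (htotal : ∀ i o (a b : D i), a ≠ b → r i o a b ∨ r i o b a)
    (flip : (∀ j, D j) → (∀ j, D j) → Prop)
    (hflip : ∀ a b, flip a b ↔ ∃ i, (∀ j, j ≠ i → a j = b j) ∧ r i b (a i) (b i))
    (pref : (∀ j, D j) → (∀ j, D j) → Prop)
    (hpref : ∀ a b, pref a b ↔ Relation.TransGen flip a b)
(flipA : Fin n → (∀ j, D j) → (∀ j, D j) → Prop)
    (hflipA : ∀ k a b, flipA k a b ↔
      ∃ i, k < i ∧ (∀ j, j ≠ i → a j = b j) ∧ r i b (a i) (b i))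
    (o₁ o₂ : ∀ j, D j) (k : Fin n)
    (hR : ∀ j, j < k → o₁ j = o₂ j)
    (hx : r k o₂ (o₁ k) (o₂ k))
    (hsub : Relation.TransGen (flipA k) (Function.update o₁ k (o₂ k)) o₂) :
    pref o₁ o₂ :=
  stmt_14_general D Pa hPa r hdep flip hflip pref hpref flipA hflipA o₁ o₂ k hR hx hsub
end

section
/- Let N be an acyclic CP-net with induced flip-based preference ≻, outcomes o₁ = R·x₁·o₁′, o₂ = R·x₂·o₂′ sharing ancestor assignment R at X with x₁ ≻ x₂ given R. Let N₁, N₂ be the sub-CP-nets restricted to R·x₁ and R·x₂ with induced preferences ≻₁, ≻₂. If there exists a partial assignment o₃′ to the remaining variables with o₃′ ≻₂ o₂′ and o₁′ ≻₁ o₃′, then o₁ ≻ o₂. -/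
/-!
The flipping sequence `o₁ → o₃[k ↦ o₁ k] → o₃[k ↦ o₂ k] → o₂` witnesses `o₁ ≻ o₂`: the two outer
segments are the sub-net chains, whose flips are flips of the whole net, and the middle step is a
single flip at `k`, valid because the parents of `k` lie below `k`, where `o₃` agrees with `o₂`.
-/

open Function

section FlipChain

variable {n : ℕ} {D : Fin n → Type} {r : ∀ i : Fin n, (∀ j, D j) → D i → D i → Prop}

theorem cpt_iff_of_agree_below {Pa : Fin n → Set (Fin n)} (hPa : ∀ i j, j ∈ Pa i → j < i)
    (hdep : ∀ i o o', (∀ j ∈ Pa i, o j = o' j) → ∀ a b, (r i o a b ↔ r i o' a b))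
    {k : Fin n} {o o' : ∀ j, D j} (h : ∀ j, j < k → o j = o' j) (a b : D k) :
    r k o a b ↔ r k o' a b :=
  hdep k o o' (fun j hj => h j (hPa k j hj)) a b

theorem flip_update_update {flip : (∀ j, D j) → (∀ j, D j) → Prop}
    (hflip : ∀ a b, flip a b ↔ ∃ i, (∀ j, j ≠ i → a j = b j) ∧ r i b (a i) (b i))
    (o : ∀ j, D j) (k : Fin n) {a b : D k} (hab : r k (update o k b) a b) :
    flip (update o k a) (update o k b) :=
  (hflip _ _).mpr ⟨k, fun j hj => by simp only [update_of_ne hj], by simpa only [update_self]⟩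

theorem flip_of_flipA {flip : (∀ j, D j) → (∀ j, D j) → Prop}
    (hflip : ∀ a b, flip a b ↔ ∃ i, (∀ j, j ≠ i → a j = b j) ∧ r i b (a i) (b i))
    {flipA : Fin n → (∀ j, D j) → (∀ j, D j) → Prop}
    (hflipA : ∀ k a b, flipA k a b ↔
      ∃ i, k < i ∧ (∀ j, j ≠ i → a j = b j) ∧ r i b (a i) (b i)) (k : Fin n) :
    flipA k ≤ flip := fun a b hab => by
  obtain ⟨i, -, hi⟩ := (hflipA k a b).mp hab
  exact (hflip a b).mpr ⟨i, hi⟩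

end FlipChain

theorem stmt_16_general {n : ℕ} (D : Fin n → Type)
    (Pa : Fin n → Set (Fin n)) (hPa : ∀ i j, j ∈ Pa i → j < i)
    (r : ∀ i : Fin n, (∀ j, D j) → D i → D i → Prop)
    (hdep : ∀ i o o', (∀ j ∈ Pa i, o j = o' j) → ∀ a b, (r i o a b ↔ r i o' a b))
    (flip : (∀ j, D j) → (∀ j, D j) → Prop)
    (hflip : ∀ a b, flip a b ↔ ∃ i, (∀ j, j ≠ i → a j = b j) ∧ r i b (a i) (b i))
    (pref : (∀ j, D j) → (∀ j, D j) → Prop)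
    (hpref : ∀ a b, pref a b ↔ Relation.TransGen flip a b)
(flipA : Fin n → (∀ j, D j) → (∀ j, D j) → Prop)
    (hflipA : ∀ k a b, flipA k a b ↔
      ∃ i, k < i ∧ (∀ j, j ≠ i → a j = b j) ∧ r i b (a i) (b i))
    (o₁ o₂ : ∀ j, D j) (k : Fin n)
    (hx : r k o₂ (o₁ k) (o₂ k))
    (o₃ : ∀ j, D j) (hpre3 : ∀ j, j < k → o₃ j = o₂ j)
    (h2 : Relation.TransGen (flipA k) (Function.update o₃ k (o₂ k)) o₂)
    (h1 : Relation.TransGen (flipA k) o₁ (Function.update o₃ k (o₁ k))) :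
    pref o₁ o₂ := by
  have hbelow : ∀ j, j < k → o₂ j = update o₃ k (o₂ k) j := fun j hj => by
    rw [update_of_ne hj.ne, hpre3 j hj]
  have hmid : flip (update o₃ k (o₁ k)) (update o₃ k (o₂ k)) :=
    flip_update_update hflip o₃ k ((cpt_iff_of_agree_below hPa hdep hbelow _ _).mp hx)
  have hsub := Relation.TransGen.mono (flip_of_flipA hflip hflipA k)
  exact (hpref o₁ o₂).mpr (((hsub _ _ h1).tail hmid).trans (hsub _ _ h2))

theorem stmt_16 {n : ℕ} (D : Fin n → Type) [∀ i, Finite (D i)]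
    (Pa : Fin n → Set (Fin n)) (hPa : ∀ i j, j ∈ Pa i → j < i)
    (r : ∀ i : Fin n, (∀ j, D j) → D i → D i → Prop)
    (hdep : ∀ i o o', (∀ j ∈ Pa i, o j = o' j) → ∀ a b, (r i o a b ↔ r i o' a b))
    (hirr : ∀ i o a, ¬ r i o a a)
    (htrans : ∀ i o a b c, r i o a b → r i o b c → r i o a c)
    (htotal : ∀ i o (a b : D i), a ≠ b → r i o a b ∨ r i o b a)
    (flip : (∀ j, D j) → (∀ j, D j) → Prop)
    (hflip : ∀ a b, flip a b ↔ ∃ i, (∀ j, j ≠ i → a j = b j) ∧ r i b (a i) (b i))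
    (pref : (∀ j, D j) → (∀ j, D j) → Prop)
    (hpref : ∀ a b, pref a b ↔ Relation.TransGen flip a b)
(flipA : Fin n → (∀ j, D j) → (∀ j, D j) → Prop)
    (hflipA : ∀ k a b, flipA k a b ↔
      ∃ i, k < i ∧ (∀ j, j ≠ i → a j = b j) ∧ r i b (a i) (b i))
    (o₁ o₂ : ∀ j, D j) (k : Fin n)
    (hR : ∀ j, j < k → o₁ j = o₂ j)
    (hx : r k o₂ (o₁ k) (o₂ k))
    (o₃ : ∀ j, D j) (hpre3 : ∀ j, j < k → o₃ j = o₂ j)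
    (h2 : Relation.TransGen (flipA k) (Function.update o₃ k (o₂ k)) o₂)
    (h1 : Relation.TransGen (flipA k) o₁ (Function.update o₃ k (o₁ k))) :
    pref o₁ o₂ :=
  stmt_16_general D Pa hPa r hdep flip hflip pref hpref flipA hflipA o₁ o₂ k hx o₃ hpre3 h2 h1
end
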